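/- Let x_b ∈ I, let M ≥ 2 be an integer, and let α, c_{−1}, c_0, c_1 : ℝ → ℂ be continuous on a neighborhood of 0 with α(0) ≠ 0. Assume that, as h → 0: c_1(h)·𝔈_1(h) − α(h) = O(h^{M+1}), c_{−1}(h)·𝔈_1(−h) − α(h) = O(h^{M+1}), and c_0(h) + c_1(h)·𝔈_0(h) + c_{−1}(h)·𝔈_0(−h) = O(h^{M+2}). Then for every infinitely differentiable u : I → ℂ satisfying (a u')' + k u = 0 on I, one has c_{−1}(h)·u(x_b − h) + c_0(h)·u(x_b) + c_1(h)·u(x_b + h) = O(h^{M+2}) as h → 0; equivalently, the compact three-point stencil h^{−2}[c_{−1}(h)u(x_b−h) + c_0(h)u(x_b) + c_1(h)u(x_b+h)] has numerical dispersion order M at the base point x_b. -/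

import Mathlib

open Filter Topology Asymptotics

/-- `Ecoef a k n = (E_{n+2,0}, E_{n+2,1})` from the recursion of the paper. -/
noncomputable def Ecoef (a : ℝ → ℝ) (k : ℝ → ℂ) : ℕ → (ℝ → ℂ) × (ℝ → ℂ)
  | 0 => (fun x => -k x / (a x : ℂ), fun x => -((deriv a x : ℝ) : ℂ) / (a x : ℂ))
  | n + 1 =>
      (fun x => deriv (Ecoef a k n).1 x - k x / (a x : ℂ) * (Ecoef a k n).2 x,
       fun x => (Ecoef a k n).1 x + deriv (Ecoef a k n).2 x
          - ((deriv a x : ℝ) : ℂ) / (a x : ℂ) * (Ecoef a k n).2 x)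

/-- `E_{j,0}` for `j ≥ 2` (junk value for `j < 2`). -/
noncomputable def Ej0 (a : ℝ → ℝ) (k : ℝ → ℂ) (j : ℕ) : ℝ → ℂ := (Ecoef a k (j - 2)).1

/-- `E_{j,1}` for `j ≥ 2` (junk value for `j < 2`). -/
noncomputable def Ej1 (a : ℝ → ℝ) (k : ℝ → ℂ) (j : ℕ) : ℝ → ℂ := (Ecoef a k (j - 2)).2

/-- `Fcoef a k n m = F_{n+2, m-1}` (second index shifted by one: `m = ℓ + 1`, `ℓ ≥ -1`). -/
noncomputable def Fcoef (a : ℝ → ℝ) (k : ℝ → ℂ) : ℕ → ℕ → ℝ → ℂ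
  | 0, 0 => fun x => (Ecoef a k 0).2 x / (a x : ℂ)
  | 0, 1 => fun x => 1 / (a x : ℂ)
  | 0, _ + 2 => fun _ => 0
  | n + 1, 0 => fun x => (Ecoef a k (n + 1)).2 x / (a x : ℂ)
  | n + 1, m + 1 => fun x => deriv (Fcoef a k n (m + 1)) x + Fcoef a k n m x

/-- `F_{j,ℓ}` for `j ≥ 2`, `ℓ ≥ 0` (junk value for `j < 2`). -/
noncomputable def Fjl (a : ℝ → ℝ) (k : ℝ → ℂ) (j ℓ : ℕ) : ℝ → ℂ := Fcoef a k (j - 2) (ℓ + 1)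

/-- `𝔈₀(h) = 1 + ∑_{j=2}^{B} E_{j,0}(x_b) h^j / j!`. -/
noncomputable def EPoly0 (a : ℝ → ℝ) (k : ℝ → ℂ) (xb : ℝ) (B : ℕ) (h : ℝ) : ℂ :=
  1 + ∑ j ∈ Finset.Icc 2 B, Ej0 a k j xb * (h : ℂ) ^ j / (Nat.factorial j : ℂ)

/-- `𝔈₁(h) = 1 + ∑_{j=2}^{B} E_{j,1}(x_b) h^(j-1) / j!`. -/
noncomputable def EPoly1 (a : ℝ → ℝ) (k : ℝ → ℂ) (xb : ℝ) (B : ℕ) (h : ℝ) : ℂ :=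
  1 + ∑ j ∈ Finset.Icc 2 B, Ej1 a k j xb * (h : ℂ) ^ (j - 1) / (Nat.factorial j : ℂ)

/-- `𝔉_ℓ(h) = ∑_{j=ℓ+2}^{B} F_{j,ℓ}(x_b) h^(j-ℓ-2) / j!`. -/
noncomputable def FPoly (a : ℝ → ℝ) (k : ℝ → ℂ) (xb : ℝ) (ℓ B : ℕ) (h : ℝ) : ℂ :=
  ∑ j ∈ Finset.Icc (ℓ + 2) B, Fjl a k j ℓ xb * (h : ℂ) ^ (j - ℓ - 2) / (Nat.factorial j : ℂ)

/-!
Iterating the equation `(a u')' = -k u` expresses every derivative `u⁽ʲ⁾`, `j ≥ 2`, as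
`E_{j,0} u + E_{j,1} u'`, so the Taylor polynomial of degree `M + 1` of `u` at `x_b` is
`u(x_b) 𝔈₀(h) + u'(x_b) h 𝔈₁(h)`. Substituting the Taylor expansions of `u(x_b ± h)` into the
stencil leaves `u(x_b)` times the `𝔈₀`-condition, `h u'(x_b)` times the difference of the two
`𝔈₁`-conditions, and the bounded coefficients `c_{±1}` times the Taylor remainders, each of them
`O(h^{M+2})`.
-/

open scoped Nat ContDiff

section Taylor

variable {E : Type*} [NormedAddCommGroup E] [NormedSpace ℝ E]

theorem taylor_isBigO {f : ℝ → E} {x₀ : ℝ} {n : ℕ} {s : Set ℝ}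
    (hs : Convex ℝ s) (hx₀s : x₀ ∈ s) (hf : ContDiffOn ℝ (n + 1) f s) :
    (fun x ↦ f x - taylorWithinEval f n s x₀ x) =O[𝓝[s] x₀] fun x ↦ (x - x₀) ^ (n + 1) := by
  have hrem := (taylor_isLittleO (n := n + 1) hs hx₀s (by exact_mod_cast hf)).isBigO
  have hterm : (fun x ↦ (((n + 1 : ℝ) * n !)⁻¹ * (x - x₀) ^ (n + 1)) •
      iteratedDerivWithin (n + 1) f s x₀) =O[𝓝[s] x₀] fun x ↦ (x - x₀) ^ (n + 1) := by
    have := ((isBigO_refl (fun x : ℝ ↦ (x - x₀) ^ (n + 1)) (𝓝[s] x₀)).const_mul_left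
      ((n + 1 : ℝ) * n !)⁻¹).smul (isBigO_const_one ℝ (iteratedDerivWithin (n + 1) f s x₀) _)
    simpa using this
  refine (hrem.add hterm).congr_left fun x ↦ ?_
  rw [taylorWithinEval_succ]
  abel

theorem taylor_isBigO_nhds {f : ℝ → E} {x₀ : ℝ} {n : ℕ} {s : Set ℝ}
    (hs : IsOpen s) (hx₀s : x₀ ∈ s) (hf : ContDiffOn ℝ (n + 1) f s) :
    (fun x ↦ f x - ∑ j ∈ Finset.range (n + 1), ((j ! : ℝ)⁻¹ * (x - x₀) ^ j) • iteratedDeriv j f x₀)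
      =O[𝓝 x₀] fun x ↦ (x - x₀) ^ (n + 1) := by
  obtain ⟨ε, hε, hball⟩ := Metric.isOpen_iff.1 hs x₀ hx₀s
  have hx₀ : x₀ ∈ Metric.ball x₀ ε := Metric.mem_ball_self hε
  have key := taylor_isBigO (convex_ball x₀ ε) hx₀ (hf.mono hball)
  rw [nhdsWithin_eq_nhds.2 (Metric.isOpen_ball.mem_nhds hx₀)] at key
  refine key.congr_left fun x ↦ ?_
  simp only [taylor_within_apply, iteratedDerivWithin_of_isOpen Metric.isOpen_ball hx₀]

theorem taylor_isBigO_comp_add_mul {f : ℝ → E} {x₀ : ℝ} {n : ℕ} {s : Set ℝ}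
    (hs : IsOpen s) (hx₀s : x₀ ∈ s) (hf : ContDiffOn ℝ (n + 1) f s) (c : ℝ) :
    (fun h ↦ f (x₀ + c * h) -
        ∑ j ∈ Finset.range (n + 1), ((j ! : ℝ)⁻¹ * (c * h) ^ j) • iteratedDeriv j f x₀)
      =O[𝓝 0] fun h ↦ h ^ (n + 1) := by
  have hlim : Tendsto (fun h : ℝ ↦ x₀ + c * h) (𝓝 0) (𝓝 x₀) := by
    simpa using (tendsto_const_nhds (x := x₀)).add ((tendsto_id (x := 𝓝 (0 : ℝ))).const_mul c)
  have hpow : (fun h : ℝ ↦ (x₀ + c * h - x₀) ^ (n + 1)) =O[𝓝 0] fun h ↦ h ^ (n + 1) := by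
    simpa only [add_sub_cancel_left, mul_pow] using
      (isBigO_refl (fun h : ℝ ↦ h ^ (n + 1)) _).const_mul_left (c ^ (n + 1))
  simpa only [Function.comp_def, add_sub_cancel_left] using
    ((taylor_isBigO_nhds hs hx₀s hf).comp_tendsto hlim).trans hpow

end Taylor

section Helmholtz

variable {a : ℝ → ℝ} {k u : ℝ → ℂ} {s : Set ℝ}

theorem contDiffOn_Ecoef (hs : IsOpen s) (ha : ContDiffOn ℝ ∞ a s) (hk : ContDiffOn ℝ ∞ k s)
    (ha0 : ∀ x ∈ s, a x ≠ 0) (n : ℕ) :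
    ContDiffOn ℝ ∞ (Ecoef a k n).1 s ∧ ContDiffOn ℝ ∞ (Ecoef a k n).2 s := by
  have hderiv : ∀ {g : ℝ → ℂ}, ContDiffOn ℝ ∞ g s → ContDiffOn ℝ ∞ (deriv g) s :=
    fun hg ↦ hg.deriv_of_isOpen hs (by simp)
  have hainv : ContDiffOn ℝ ∞ (fun x ↦ (a x : ℂ)⁻¹) s :=
    (Complex.ofRealCLM.contDiff.comp_contDiffOn ha).inv fun x hx ↦ by
      simpa using ha0 x hx
  have hda : ContDiffOn ℝ ∞ (fun x ↦ ((deriv a x : ℝ) : ℂ)) s :=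
    Complex.ofRealCLM.contDiff.comp_contDiffOn (ha.deriv_of_isOpen hs (by simp))
  induction n with
  | zero => exact ⟨hk.neg.mul hainv, hda.neg.mul hainv⟩
  | succ n ih =>
    exact ⟨((hderiv ih.1).sub ((hk.mul hainv).mul ih.2)).congr fun x _ ↦ by
        simp [Ecoef, div_eq_mul_inv],
      ((ih.1.add (hderiv ih.2)).sub ((hda.mul hainv).mul ih.2)).congr fun x _ ↦ by
        simp [Ecoef, div_eq_mul_inv]⟩

theorem deriv_deriv_eq_of_helmholtz {x : ℝ} (ha : DifferentiableAt ℝ a x) (ha0 : a x ≠ 0)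
    (hu : DifferentiableAt ℝ (deriv u) x)
    (hL : deriv (fun y ↦ (a y : ℂ) * deriv u y) x + k x * u x = 0) :
    deriv (deriv u) x = (Ecoef a k 0).1 x * u x + (Ecoef a k 0).2 x * deriv u x := by
  have hprod := ha.hasDerivAt.ofReal_comp.fun_mul hu.hasDerivAt
  rw [hprod.deriv] at hL
  have ha0' : (a x : ℂ) ≠ 0 := by exact_mod_cast ha0
  simp only [Ecoef]
  field_simp
  linear_combination hL

theorem iteratedDeriv_eqOn_Ecoef (hs : IsOpen s) (ha : ContDiffOn ℝ ∞ a s)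
    (hk : ContDiffOn ℝ ∞ k s) (ha0 : ∀ x ∈ s, a x ≠ 0) (hu : ContDiffOn ℝ ∞ u s)
    (hL : ∀ x ∈ s, deriv (fun y ↦ (a y : ℂ) * deriv u y) x + k x * u x = 0) (n : ℕ) :
    Set.EqOn (iteratedDeriv (n + 2) u)
      (fun x ↦ (Ecoef a k n).1 x * u x + (Ecoef a k n).2 x * deriv u x) s := by
  have hdiff : ∀ {g : ℝ → ℂ}, ContDiffOn ℝ ∞ g s → ∀ x ∈ s, HasDerivAt g (deriv g x) x :=
    fun hg x hx ↦ ((hg.contDiffAt (hs.mem_nhds hx)).differentiableAt (by simp)).hasDerivAt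
  have hu' : ContDiffOn ℝ ∞ (deriv u) s := hu.deriv_of_isOpen hs (by simp)
  have hu'' : ∀ x ∈ s, deriv (deriv u) x
      = (Ecoef a k 0).1 x * u x + (Ecoef a k 0).2 x * deriv u x := fun x hx ↦
    deriv_deriv_eq_of_helmholtz
      ((ha.contDiffAt (hs.mem_nhds hx)).differentiableAt (by simp)) (ha0 x hx)
      (hdiff hu' x hx).differentiableAt (hL x hx)
  induction n with
  | zero => intro x hx; simpa [iteratedDeriv_succ] using hu'' x hx
  | succ n ih =>
    intro x hx
    obtain ⟨hE₀, hE₁⟩ := contDiffOn_Ecoef hs ha hk ha0 n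
    have hsum := ((hdiff hE₀ x hx).fun_mul (hdiff hu x hx)).fun_add
      ((hdiff hE₁ x hx).fun_mul (hdiff hu' x hx))
    rw [iteratedDeriv_succ, (ih.eventuallyEq_of_mem (hs.mem_nhds hx)).deriv_eq, hsum.deriv,
      hu'' x hx]
    simp only [Ecoef]
    ring

end Helmholtz

theorem taylorSum_eq_EPoly {a : ℝ → ℝ} {k u : ℝ → ℂ} {xb : ℝ}
    (hD : ∀ j, 2 ≤ j → iteratedDeriv j u xb = Ej0 a k j xb * u xb + Ej1 a k j xb * deriv u xb)
    {B : ℕ} (hB : 1 ≤ B) (h : ℝ) :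
    ∑ j ∈ Finset.range (B + 1), ((j ! : ℝ)⁻¹ * h ^ j) • iteratedDeriv j u xb
      = u xb * EPoly0 a k xb B h + deriv u xb * h * EPoly1 a k xb B h := by
  induction B, hB using Nat.le_induction with
  | base =>
    simp [Finset.sum_range_succ, EPoly0, EPoly1, mul_comm]
  | succ B hB ih =>
    rw [Finset.sum_range_succ, ih, hD (B + 1) (by omega), EPoly0, EPoly1, EPoly0, EPoly1,
      Finset.sum_Icc_succ_top (by omega), Finset.sum_Icc_succ_top (by omega),
      Nat.add_sub_cancel, Complex.real_smul]
    push_cast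
    ring

theorem stencil_isBigO {P₀ P₁ α cm1 c0 c1 U : ℝ → ℂ} {v w : ℂ} {N : ℕ}
    (hU : (fun h ↦ U h - (v * P₀ h + w * h * P₁ h)) =O[𝓝 0] fun h ↦ h ^ (N + 1))
    (hU' : (fun h ↦ U (-h) - (v * P₀ (-h) - w * h * P₁ (-h))) =O[𝓝 0] fun h ↦ h ^ (N + 1))
    (hcm1 : cm1 =O[𝓝 0] fun _ ↦ (1 : ℝ)) (hc1 : c1 =O[𝓝 0] fun _ ↦ (1 : ℝ))
    (hP₁ : (fun h ↦ c1 h * P₁ h - α h) =O[𝓝 0] fun h ↦ h ^ N)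
    (hP₁' : (fun h ↦ cm1 h * P₁ (-h) - α h) =O[𝓝 0] fun h ↦ h ^ N)
    (hP₀ : (fun h ↦ c0 h + c1 h * P₀ h + cm1 h * P₀ (-h)) =O[𝓝 0] fun h ↦ h ^ (N + 1)) :
    (fun h ↦ cm1 h * U (-h) + c0 h * v + c1 h * U h) =O[𝓝 0] fun h ↦ h ^ (N + 1) := by
  have hlin : (fun h : ℝ ↦ (h : ℂ) * (w * ((c1 h * P₁ h - α h) - (cm1 h * P₁ (-h) - α h))))
      =O[𝓝 0] fun h ↦ h ^ (N + 1) := by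
    simpa only [← pow_succ'] using
      (isBigO_of_le (g := fun h : ℝ ↦ h) (𝓝 0) fun h ↦ by simp).mul
        ((hP₁.sub hP₁').const_mul_left w)
  have hrem := (hcm1.mul hU').add (hc1.mul hU)
  simp only [one_mul] at hrem
  refine (((hP₀.const_mul_left v).add hlin).add hrem).congr_left fun h ↦ ?_
  ring

theorem compact_stencil_dispersion_order_general
    (p q : ℝ) (a : ℝ → ℝ) (k : ℝ → ℂ)
    (ha : ContDiffOn ℝ (⊤ : ℕ∞) a (Set.Ioo p q))
    (hk : ContDiffOn ℝ (⊤ : ℕ∞) k (Set.Ioo p q))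
    (hapos : ∀ x ∈ Set.Ioo p q, 0 < a x)
    (xb : ℝ) (hxb : xb ∈ Set.Ioo p q) (M : ℕ)
    (α cm1 c0 c1 : ℝ → ℂ)
    (hcm1cont : ∃ U ∈ 𝓝 (0 : ℝ), ContinuousOn cm1 U)
    (hc1cont : ∃ U ∈ 𝓝 (0 : ℝ), ContinuousOn c1 U)
    (hc1 : (fun h : ℝ => c1 h * EPoly1 a k xb (M + 1) h - α h)
      =O[𝓝 (0 : ℝ)] fun h : ℝ => h ^ (M + 1))
    (hcm1 : (fun h : ℝ => cm1 h * EPoly1 a k xb (M + 1) (-h) - α h)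
      =O[𝓝 (0 : ℝ)] fun h : ℝ => h ^ (M + 1))
    (hc0 : (fun h : ℝ => c0 h + c1 h * EPoly0 a k xb (M + 1) h + cm1 h * EPoly0 a k xb (M + 1) (-h))
      =O[𝓝 (0 : ℝ)] fun h : ℝ => h ^ (M + 2)) :
    ∀ u : ℝ → ℂ, ContDiffOn ℝ (⊤ : ℕ∞) u (Set.Ioo p q) →
      (∀ x ∈ Set.Ioo p q, deriv (fun y => (a y : ℂ) * deriv u y) x + k x * u x = 0) →
      (fun h : ℝ => cm1 h * u (xb - h) + c0 h * u xb + c1 h * u (xb + h))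
        =O[𝓝 (0 : ℝ)] fun h : ℝ => h ^ (M + 2) := by
  intro u hu hL
  have hs : IsOpen (Set.Ioo p q) := isOpen_Ioo
  have hD (j : ℕ) (hj : 2 ≤ j) :
      iteratedDeriv j u xb = Ej0 a k j xb * u xb + Ej1 a k j xb * deriv u xb := by
    obtain ⟨n, rfl⟩ := Nat.exists_eq_add_of_le' hj
    exact iteratedDeriv_eqOn_Ecoef hs ha hk (fun x hx ↦ (hapos x hx).ne') hu hL n hxb
  have hT := taylorSum_eq_EPoly hD (B := M + 1) (by omega)
  have hu' : ContDiffOn ℝ (↑(M + 1) + 1) u (Set.Ioo p q) := hu.of_le (by exact_mod_cast le_top)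
  have hbdd {c : ℝ → ℂ} (hc : ∃ U ∈ 𝓝 (0 : ℝ), ContinuousOn c U) :
      c =O[𝓝 0] fun _ ↦ (1 : ℝ) := by
    obtain ⟨U, hU, hcU⟩ := hc
    exact (hcU.continuousAt hU).isBigO_one ℝ
  have hright := taylor_isBigO_comp_add_mul hs hxb hu' 1
  have hleft := taylor_isBigO_comp_add_mul hs hxb hu' (-1)
  simp only [one_mul, neg_one_mul, hT] at hright hleft
  replace hleft := by simpa only [sub_eq_add_neg, Complex.ofReal_neg, mul_neg, neg_mul] using hleft
  simpa only [sub_eq_add_neg] using stencil_isBigO (U := fun h ↦ u (xb + h)) (w := deriv u xb)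
    hright hleft (hbdd hcm1cont) (hbdd hc1cont) hc1 hcm1 hc0

/-- Theorem 3.2, numerical dispersion part.  Under the conditions (3.6)
on the stencil coefficients `c₋₁, c₀, c₁`, the compact three-point stencil annihilates every
smooth solution of the homogeneous equation `(a u')' + k u = 0` up to `O(h^{M+2})`, i.e. the
scheme has numerical dispersion order `M` at the base point `x_b`. -/
theorem compact_stencil_dispersion_order
    (p q : ℝ) (a : ℝ → ℝ) (k : ℝ → ℂ)
    (ha : ContDiffOn ℝ (⊤ : ℕ∞) a (Set.Ioo p q))
    (hk : ContDiffOn ℝ (⊤ : ℕ∞) k (Set.Ioo p q))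
    (hapos : ∀ x ∈ Set.Ioo p q, 0 < a x)
    (xb : ℝ) (hxb : xb ∈ Set.Ioo p q) (M : ℕ) (hM : 2 ≤ M)
    (α cm1 c0 c1 : ℝ → ℂ)
    (hαcont : ∃ U ∈ 𝓝 (0 : ℝ), ContinuousOn α U)
    (hcm1cont : ∃ U ∈ 𝓝 (0 : ℝ), ContinuousOn cm1 U)
    (hc0cont : ∃ U ∈ 𝓝 (0 : ℝ), ContinuousOn c0 U)
    (hc1cont : ∃ U ∈ 𝓝 (0 : ℝ), ContinuousOn c1 U)
    (hα0 : α 0 ≠ 0)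
    (hc1 : (fun h : ℝ => c1 h * EPoly1 a k xb (M + 1) h - α h)
      =O[𝓝 (0 : ℝ)] fun h : ℝ => h ^ (M + 1))
    (hcm1 : (fun h : ℝ => cm1 h * EPoly1 a k xb (M + 1) (-h) - α h)
      =O[𝓝 (0 : ℝ)] fun h : ℝ => h ^ (M + 1))
    (hc0 : (fun h : ℝ => c0 h + c1 h * EPoly0 a k xb (M + 1) h + cm1 h * EPoly0 a k xb (M + 1) (-h))
      =O[𝓝 (0 : ℝ)] fun h : ℝ => h ^ (M + 2)) :
    ∀ u : ℝ → ℂ, ContDiffOn ℝ (⊤ : ℕ∞) u (Set.Ioo p q) →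
      (∀ x ∈ Set.Ioo p q, deriv (fun y => (a y : ℂ) * deriv u y) x + k x * u x = 0) →
      (fun h : ℝ => cm1 h * u (xb - h) + c0 h * u xb + c1 h * u (xb + h))
        =O[𝓝 (0 : ℝ)] fun h : ℝ => h ^ (M + 2) :=
  compact_stencil_dispersion_order_general p q a k ha hk hapos xb hxb M α cm1 c0 c1 hcm1cont hc1cont
    hc1 hcm1 hc0
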